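/- Let U ⊆ ℝ be an open set with r³ ≠ 3 for all r ∈ U, let φ(r) = 12^{2/3}·r/(2(r³−3)) and ψ(r) = 2·12^{1/3}·r²/(r³−3), and suppose the derivative φ'(r) ≠ 0 for every r ∈ U. Let H : ℝ → ℝ be six times differentiable on an open set V ⊆ ℝ containing φ(U), and suppose H(φ(r)) = ψ(r) for all r ∈ U. Then H satisfies Noth's equation at every point of φ(U): for all t ∈ φ(U), 10·(H''(t))³·H⁽⁶⁾(t) − 70·(H''(t))²·H⁽³⁾(t)·H⁽⁵⁾(t) − 49·(H''(t))²·(H⁽⁴⁾(t))² + 280·H''(t)·(H⁽³⁾(t))²·H⁽⁴⁾(t) − 175·(H⁽³⁾(t))⁴ = 0. -/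

import Mathlib

/-!
Along the curve `t = a r/(r³-3)`, `H = b r²/(r³-3)` (with `a = 12^(2/3)/2`, `b = 2·12^(1/3)`),
the derivatives are computed by iterating `d/dt = (dt/dr)⁻¹ d/dr`: this gives
`H⁽ᵏ⁾(t) = b a⁻ᵏ G_k(r)`, where for `k ≥ 2` the rational function `G_k` has the shape
`P_k(r) (r³-3)^(k+2) / (2r³+3)^(2k-1)` with an explicit polynomial `P_k`.
Noth's expression is homogeneous of degree 4 in `H` and of weight 12 in the order of
differentiation, so `b a⁻ᵏ` and `(r³-3)²(2r³+3)·((r³-3)/(2r³+3)²)ᵏ` factor out, and what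
remains is a polynomial identity between `P₂, …, P₆`.
-/

/-- Noth's equation at a point `t` for a function `H`, expressed via iterated derivatives. -/
def NothEqAt (H : ℝ → ℝ) (t : ℝ) : Prop :=
  10 * (iteratedDeriv 2 H t) ^ 3 * iteratedDeriv 6 H t
    - 70 * (iteratedDeriv 2 H t) ^ 2 * iteratedDeriv 3 H t * iteratedDeriv 5 H t
    - 49 * (iteratedDeriv 2 H t) ^ 2 * (iteratedDeriv 4 H t) ^ 2
    + 280 * iteratedDeriv 2 H t * (iteratedDeriv 3 H t) ^ 2 * iteratedDeriv 4 H t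
    - 175 * (iteratedDeriv 3 H t) ^ 4 = 0

open Polynomial Filter Topology

def nothExpr (y₂ y₃ y₄ y₅ y₆ : ℝ) : ℝ :=
  10 * y₂ ^ 3 * y₆ - 70 * y₂ ^ 2 * y₃ * y₅ - 49 * y₂ ^ 2 * y₄ ^ 2 + 280 * y₂ * y₃ ^ 2 * y₄
    - 175 * y₃ ^ 4

theorem nothExpr_mul_pow (b c y₂ y₃ y₄ y₅ y₆ : ℝ) :
    nothExpr (b * c ^ 2 * y₂) (b * c ^ 3 * y₃) (b * c ^ 4 * y₄) (b * c ^ 5 * y₅) (b * c ^ 6 * y₆)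
      = b ^ 4 * c ^ 12 * nothExpr y₂ y₃ y₄ y₅ y₆ := by
  unfold nothExpr
  ring

theorem deriv_eq_div_of_comp_eventuallyEq {g φ F : ℝ → ℝ} {r D W : ℝ}
    (hg : DifferentiableAt ℝ g (φ r)) (hφ : HasDerivAt φ D r) (hF : HasDerivAt F W r)
    (hgF : g ∘ φ =ᶠ[𝓝 r] F) (hD : D ≠ 0) : deriv g (φ r) = W / D :=
  eq_div_of_mul_eq hD ((hg.hasDerivAt.comp r hφ).unique (hF.congr_of_eventuallyEq hgF))

theorem iteratedDeriv_comp_eq_of_hasDerivAt {H φ φ' : ℝ → ℝ} {F : ℕ → ℝ → ℝ} {U : Set ℝ}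
    {n : ℕ} (hU : IsOpen U)
    (hH : ∀ k < n, ∀ r ∈ U, DifferentiableAt ℝ (iteratedDeriv k H) (φ r))
    (hφ : ∀ r ∈ U, HasDerivAt φ (φ' r) r) (hφ' : ∀ r ∈ U, φ' r ≠ 0)
    (hF : ∀ k < n, ∀ r ∈ U, HasDerivAt (F k) (F (k + 1) r * φ' r) r)
    (hF₀ : ∀ r ∈ U, H (φ r) = F 0 r) :
    ∀ k ≤ n, ∀ r ∈ U, iteratedDeriv k H (φ r) = F k r := by
  intro k hk
  induction k with
  | zero => simpa using hF₀
  | succ k ih =>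
    intro r hr
    have hcomp : iteratedDeriv k H ∘ φ =ᶠ[𝓝 r] F k :=
      eventually_of_mem (hU.mem_nhds hr) (ih (by omega))
    rw [iteratedDeriv_succ, deriv_eq_div_of_comp_eventuallyEq (hH k hk r hr) (hφ r hr)
      (hF k hk r hr) hcomp (hφ' r hr), mul_div_cancel_right₀ _ (hφ' r hr)]

theorem HasDerivAt.mul_pow_div_pow {P q s : ℝ → ℝ} {P' q' s' r : ℝ} (hP : HasDerivAt P P' r)
    (hq : HasDerivAt q q' r) (hs : HasDerivAt s s' r) (hs₀ : s r ≠ 0) (m n : ℕ) :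
    HasDerivAt (fun x ↦ P x * q x ^ (m + 1) / s x ^ (n + 1))
      ((P' * q r * s r + (m + 1) * P r * q' * s r - (n + 1) * P r * q r * s') * q r ^ m
        / s r ^ (n + 2)) r := by
  refine ((hP.mul (hq.pow (m + 1))).div (hs.pow (n + 1)) (pow_ne_zero _ hs₀)).congr_deriv ?_
  simp only [Pi.mul_apply, Pi.pow_apply, Nat.add_sub_cancel]
  push_cast
  field_simp
  ring

/-- Only the values at `2 ≤ k ≤ 6` are meaningful. -/
noncomputable def nothNumerator : ℕ → ℝ[X]
  | 2 => -2
  | 3 => 12 * X ^ 2 * (X ^ 3 + 15)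
  | 4 => -120 * X * (X ^ 9 + 18 * X ^ 6 + 189 * X ^ 3 - 27)
  | 5 => 120 * (14 * X ^ 15 + 294 * X ^ 12 + 3150 * X ^ 9 + 30726 * X ^ 6 - 11583 * X ^ 3 + 243)
  | 6 => -15120 * X ^ 2 *
      (2 * X ^ 18 + 48 * X ^ 15 + 576 * X ^ 12 + 4698 * X ^ 9 + 49005 * X ^ 6 - 33048 * X ^ 3 + 2916)
  | _ => 0

/-- The quotient rule for `nothDeriv (k + 2)`, cleared of denominators. -/
theorem nothNumerator_add_three {k : ℕ} (hk : k < 4) :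
    nothNumerator (k + 3) = -(derivative (nothNumerator (k + 2)) * (X ^ 3 - 3) * (2 * X ^ 3 + 3)
      + 3 * ((k : ℝ[X]) + 4) * X ^ 2 * nothNumerator (k + 2) * (2 * X ^ 3 + 3)
      - 6 * (2 * (k : ℝ[X]) + 3) * X ^ 2 * nothNumerator (k + 2) * (X ^ 3 - 3)) := by
  interval_cases k <;>
    simp only [nothNumerator, Nat.reduceAdd, derivative_neg, derivative_sub,
      derivative_mul, derivative_ofNat, derivative_X, derivative_X_pow_succ, map_add, map_one,
      C_ofNat, Nat.cast_ofNat, Nat.cast_one, Nat.cast_zero] <;>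
    ring

theorem nothExpr_nothNumerator (r : ℝ) :
    nothExpr ((nothNumerator 2).eval r) ((nothNumerator 3).eval r) ((nothNumerator 4).eval r)
      ((nothNumerator 5).eval r) ((nothNumerator 6).eval r) = 0 := by
  simp only [nothExpr, nothNumerator, eval_neg, eval_ofNat, eval_mul, eval_pow, eval_X, eval_add,
    eval_sub]
  ring

/-- For `k ≤ 6`, the `k`-th derivative of `r²/(r³-3)` with respect to `r/(r³-3)`. -/
noncomputable def nothDeriv : ℕ → ℝ → ℝ
  | 0, r => r ^ 2 / (r ^ 3 - 3)
  | 1, r => r * (r ^ 3 + 6) / (2 * r ^ 3 + 3)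
  | k + 2, r =>
    (nothNumerator (k + 2)).eval r * (r ^ 3 - 3) ^ (k + 4) / (2 * r ^ 3 + 3) ^ (2 * k + 3)

theorem nothDeriv_eq_mul_pow_mul {k : ℕ} (hk : 2 ≤ k) {r : ℝ} (hs : 2 * r ^ 3 + 3 ≠ 0) :
    nothDeriv k r = (r ^ 3 - 3) ^ 2 * (2 * r ^ 3 + 3) * ((r ^ 3 - 3) / (2 * r ^ 3 + 3) ^ 2) ^ k
      * (nothNumerator k).eval r := by
  obtain ⟨k, rfl⟩ := Nat.exists_eq_add_of_le' hk
  rw [nothDeriv, div_pow, ← pow_mul]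
  generalize 2 * r ^ 3 + 3 = s at hs ⊢
  field_simp
  ring

theorem nothExpr_nothDeriv {r : ℝ} (hs : 2 * r ^ 3 + 3 ≠ 0) :
    nothExpr (nothDeriv 2 r) (nothDeriv 3 r) (nothDeriv 4 r) (nothDeriv 5 r) (nothDeriv 6 r)
      = 0 := by
  rw [nothDeriv_eq_mul_pow_mul le_rfl hs, nothDeriv_eq_mul_pow_mul (by norm_num) hs,
    nothDeriv_eq_mul_pow_mul (by norm_num) hs, nothDeriv_eq_mul_pow_mul (by norm_num) hs,
    nothDeriv_eq_mul_pow_mul (by norm_num) hs, nothExpr_mul_pow, nothExpr_nothNumerator, mul_zero]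

theorem hasDerivAt_nothDeriv {k : ℕ} (hk : k < 6) {r : ℝ} (hq : r ^ 3 - 3 ≠ 0)
    (hs : 2 * r ^ 3 + 3 ≠ 0) :
    HasDerivAt (nothDeriv k) (nothDeriv (k + 1) r * (-(2 * r ^ 3 + 3) / (r ^ 3 - 3) ^ 2)) r := by
  have hq' : HasDerivAt (fun x ↦ x ^ 3 - 3) (3 * r ^ 2) r := by
    simpa using (hasDerivAt_pow 3 r).sub_const 3
  have hs' : HasDerivAt (fun x ↦ 2 * x ^ 3 + 3) (6 * r ^ 2) r :=
    (((hasDerivAt_pow 3 r).const_mul 2).add_const 3).congr_deriv (by push_cast; ring)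
  match k, hk with
  | 0, _ =>
    refine ((hasDerivAt_pow 2 r).div hq' hq).congr_deriv ?_
    simp only [nothDeriv, Nat.cast_ofNat, Nat.add_one_sub_one, pow_one]
    field_simp
    ring
  | 1, _ =>
    refine (((hasDerivAt_id r).mul ((hasDerivAt_pow 3 r).add_const 6)).div hs' hs).congr_deriv ?_
    simp only [nothDeriv, nothNumerator, Pi.mul_apply, id, eval_neg, eval_ofNat, zero_add,
      mul_zero]
    field_simp
    ring
  | k + 2, hk =>
    refine (((nothNumerator (k + 2)).hasDerivAt r).mul_pow_div_pow hq' hs' hs (k + 3)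
      (2 * k + 2)).congr_deriv ?_
    have hrec := congrArg (eval r) (nothNumerator_add_three (k := k) (by omega))
    simp only [eval_add, eval_sub, eval_mul, eval_neg, eval_pow, eval_X, eval_ofNat,
      eval_natCast] at hrec
    simp only [nothDeriv, hrec]
    generalize r ^ 3 - 3 = q at hq ⊢
    generalize 2 * r ^ 3 + 3 = s at hs ⊢
    push_cast
    field_simp
    ring

theorem nothEqAt_of_iteratedDeriv_eq {H : ℝ → ℝ} {t r b c : ℝ} (hs : 2 * r ^ 3 + 3 ≠ 0)
    (hH : ∀ k ≤ 6, iteratedDeriv k H t = b * c ^ k * nothDeriv k r) : NothEqAt H t := by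
  show nothExpr (iteratedDeriv 2 H t) (iteratedDeriv 3 H t) (iteratedDeriv 4 H t)
    (iteratedDeriv 5 H t) (iteratedDeriv 6 H t) = 0
  rw [hH 2 (by norm_num), hH 3 (by norm_num), hH 4 (by norm_num),
    hH 5 (by norm_num), hH 6 le_rfl, nothExpr_mul_pow, nothExpr_nothDeriv hs, mul_zero]

theorem hasDerivAt_div_cube_sub_three {r : ℝ} (hq : r ^ 3 - 3 ≠ 0) :
    HasDerivAt (fun x ↦ x / (x ^ 3 - 3)) (-(2 * r ^ 3 + 3) / (r ^ 3 - 3) ^ 2) r := by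
  refine ((hasDerivAt_id r).div ((hasDerivAt_pow 3 r).sub_const 3) hq).congr_deriv ?_
  simp only [id, Nat.cast_ofNat]
  field_simp
  ring

theorem noth_parametrization_recovered_untranslated
    (U V : Set ℝ) (hU : IsOpen U) (hUne : ∀ r ∈ U, r ^ 3 ≠ (3 : ℝ))
    (φ ψ H : ℝ → ℝ)
    (hφ : ∀ r : ℝ, φ r = (12 : ℝ) ^ ((2 : ℝ) / 3) * r / (2 * (r ^ 3 - 3)))
    (hψ : ∀ r : ℝ, ψ r = 2 * (12 : ℝ) ^ ((1 : ℝ) / 3) * r ^ 2 / (r ^ 3 - 3))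
    (hφ' : ∀ r ∈ U, deriv φ r ≠ 0)
    (hVU : φ '' U ⊆ V)
    (hdiff : ∀ k < 6, ∀ t ∈ V, DifferentiableAt ℝ (iteratedDeriv k H) t)
    (hpar : ∀ r ∈ U, H (φ r) = ψ r) :
    ∀ t ∈ φ '' U, NothEqAt H t := by
  set a : ℝ := (12 : ℝ) ^ ((2 : ℝ) / 3) / 2 with ha_def
  set b : ℝ := 2 * (12 : ℝ) ^ ((1 : ℝ) / 3)
  have ha : a ≠ 0 := by positivity
  have hq : ∀ r ∈ U, r ^ 3 - 3 ≠ 0 := fun r hr ↦ sub_ne_zero.2 (hUne r hr)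
  have hφa : φ = fun x ↦ a * (x / (x ^ 3 - 3)) :=
    funext fun x ↦ by rw [hφ, ha_def, mul_div_mul_comm]
  have hφD : ∀ r ∈ U, HasDerivAt φ (a * (-(2 * r ^ 3 + 3) / (r ^ 3 - 3) ^ 2)) r := fun r hr ↦
    hφa ▸ (hasDerivAt_div_cube_sub_three (hq r hr)).const_mul a
  have hφD_ne : ∀ r ∈ U, a * (-(2 * r ^ 3 + 3) / (r ^ 3 - 3) ^ 2) ≠ 0 := fun r hr ↦
    (hφD r hr).deriv ▸ hφ' r hr
  have hs : ∀ r ∈ U, 2 * r ^ 3 + 3 ≠ 0 := fun r hr h ↦ hφD_ne r hr (by simp [h])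
  have key := iteratedDeriv_comp_eq_of_hasDerivAt (F := fun k r ↦ b * a⁻¹ ^ k * nothDeriv k r)
    hU (fun k hk r hr ↦ hdiff k hk (φ r) (hVU ⟨r, hr, rfl⟩)) hφD hφD_ne
    (fun k hk r hr ↦ ((hasDerivAt_nothDeriv hk (hq r hr) (hs r hr)).const_mul
      (b * a⁻¹ ^ k)).congr_deriv (by rw [pow_succ a⁻¹ k]; field_simp))
    (fun r hr ↦ by simp only [hpar r hr, hψ, nothDeriv]; ring)
  rintro _ ⟨r, hr, rfl⟩
  exact nothEqAt_of_iteratedDeriv_eq (hs r hr) fun k hk ↦ key k hk r hr
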